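/- Let σ be an L_OR sentence. Then PA ⊢ σ if and only if there is an inductive formula φ(x) such that PA⁻ ⊢ ∀x φ(x) ↔ σ. -/

import Mathlib

open FirstOrder Language

/-! ### The language `L_OR = {0, 1, +, ×, <}` of ordered rings -/

/-- Function symbols of the language of ordered rings. -/
inductive LorFunc : ℕ → Type
  | zero : LorFunc 0
  | one : LorFunc 0
  | add : LorFunc 2
  | mul : LorFunc 2

/-- Relation symbols of the language of ordered rings: just `<`. -/
inductive LorRel : ℕ → Type
  | lt : LorRel 2

/-- The first-order language of ordered rings. -/
def Lor : Language := ⟨LorFunc, LorRel⟩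

/-- The term `0`. -/
def zeroT {α : Type} : Lor.Term α := Constants.term LorFunc.zero

/-- The term `1`. -/
def oneT {α : Type} : Lor.Term α := Constants.term LorFunc.one

/-- Addition of terms. -/
def addT {α : Type} (t u : Lor.Term α) : Lor.Term α := Functions.apply₂ LorFunc.add t u

/-- Multiplication of terms. -/
def mulT {α : Type} (t u : Lor.Term α) : Lor.Term α := Functions.apply₂ LorFunc.mul t u

/-- The term `2`, an abbreviation for `1 + 1`. -/
def twoT {α : Type} : Lor.Term α := addT oneT oneT

/-- The numeral `k`, i.e. the closed term `(⋯((0+1)+1)+⋯+1)` with `k` ones. -/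
def numT {α : Type} : ℕ → Lor.Term α
  | 0 => zeroT
  | n + 1 => addT (numT n) oneT

/-- The bounded formula `t < u`. -/
def ltBF {α : Type} {n : ℕ} (t u : Lor.Term (α ⊕ Fin n)) : Lor.BoundedFormula α n :=
  Relations.boundedFormula₂ LorRel.lt t u

/-- The formula `t < u`. -/
def ltFml {α : Type} (t u : Lor.Term α) : Lor.Formula α :=
  Relations.formula₂ LorRel.lt t u

/-- The formula `t ≤ u`, an abbreviation for `t < u ∨ t = u`. -/
def leFml {α : Type} (t u : Lor.Term α) : Lor.Formula α :=
  ltFml t u ⊔ Term.equal t u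

/-! ### The base theory `PA⁻` -/

/-- `PA⁻`, the theory of non-negative parts of discretely ordered rings. -/
def PAminus : Lor.Theory :=
  { -- (P1) associativity of +
    ∀' ∀' ∀' (addT (addT &0 &1) &2 =' addT &0 (addT &1 &2)),
    -- (P2) commutativity of +
    ∀' ∀' (addT &0 &1 =' addT &1 &0),
    -- (P3) associativity of ×
    ∀' ∀' ∀' (mulT (mulT &0 &1) &2 =' mulT &0 (mulT &1 &2)),
    -- (P4) commutativity of ×
    ∀' ∀' (mulT &0 &1 =' mulT &1 &0),
    -- (P5) distributivity
    ∀' ∀' ∀' (mulT &0 (addT &1 &2) =' addT (mulT &0 &1) (mulT &0 &2)),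
    -- (P6) x + 0 = x
    ∀' (addT &0 zeroT =' &0),
    -- (P7) x × 0 = 0
    ∀' (mulT &0 zeroT =' zeroT),
    -- (P8) x × 1 = x
    ∀' (mulT &0 oneT =' &0),
    -- (P9) transitivity of <
    ∀' ∀' ∀' (ltBF &0 &1 ⊓ ltBF &1 &2 ⟹ ltBF &0 &2),
    -- (P10) irreflexivity of <
    ∀' ∼(ltBF &0 &0),
    -- (P11) linearity of <
    ∀' ∀' (ltBF &0 &1 ⊔ &0 =' &1 ⊔ ltBF &1 &0),
    -- (P12) x < y → x + z < y + z
    ∀' ∀' ∀' (ltBF &0 &1 ⟹ ltBF (addT &0 &2) (addT &1 &2)),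
    -- (P13) z ≠ 0 ∧ x < y → x × z < y × z
    ∀' ∀' ∀' (∼(&2 =' zeroT) ⊓ ltBF &0 &1 ⟹ ltBF (mulT &0 &2) (mulT &1 &2)),
    -- (P14) x < y ↔ ∃z ((x + z) + 1 = y)
    ∀' ∀' (ltBF &0 &1 ⇔ ∃' (addT (addT &0 &2) oneT =' &1)),
    -- (P15) 0 < 1 ∧ (x > 0 → x ≥ 1)
    ltBF zeroT oneT ⊓ ∀' (ltBF zeroT &0 ⟹ ltBF oneT &0 ⊔ oneT =' &0),
    -- (P16) x ≥ 0
    ∀' (ltBF zeroT &0 ⊔ zeroT =' &0) }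

/-! ### Formulas `θ(x, z̄)` with a distinguished variable `x` and parameters `z̄`

A formula `θ(x, z̄)` with `m` parameters `z̄` and a distinguished induction
variable `x` is represented as `θ : Lor.Formula (Fin m ⊕ Fin 1)`, where the
`Fin m` component gives the parameters and the `Fin 1` component gives `x`. -/

/-- The distinguished variable `x` as a term. -/
def xT {m : ℕ} : Lor.Term (Fin m ⊕ Fin 1) := Term.var (Sum.inr 0)

/-- `θ(t, z̄)`, where `t` is a term possibly involving `x` and the parameters. -/
def substX {m : ℕ} (θ : Lor.Formula (Fin m ⊕ Fin 1)) (t : Lor.Term (Fin m ⊕ Fin 1)) :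
    Lor.Formula (Fin m ⊕ Fin 1) :=
  θ.subst (Sum.elim (fun i => Term.var (Sum.inl i)) fun _ => t)

/-- `θ(t, z̄)` where `t` is a term in the parameters only. -/
def substP {m : ℕ} (θ : Lor.Formula (Fin m ⊕ Fin 1)) (t : Lor.Term (Fin m)) :
    Lor.Formula (Fin m) :=
  θ.subst (Sum.elim (fun i => Term.var i) fun _ => t)

/-- `∀x θ(x, z̄)`. -/
noncomputable def allX {m : ℕ} (θ : Lor.Formula (Fin m ⊕ Fin 1)) : Lor.Formula (Fin m) :=
  Formula.iAlls (Fin 1) θ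

/-- The universal closure of a formula, as a sentence. -/
noncomputable def closeAll {α : Type} [Finite α] (φ : Lor.Formula α) : Lor.Sentence :=
  Formula.iAlls α (φ.relabel (Sum.inr : α → Empty ⊕ α))

/-- `∀x' < x, θ(x', z̄)`, a formula with free variable `x` (and parameters). -/
noncomputable def allLtX {m : ℕ} (θ : Lor.Formula (Fin m ⊕ Fin 1)) :
    Lor.Formula (Fin m ⊕ Fin 1) :=
  Formula.iAlls (Fin 1)
    (ltFml (Term.var (Sum.inr 0)) (Term.var (Sum.inl (Sum.inr 0))) ⟹
      θ.relabel (Sum.elim (fun i => Sum.inl (Sum.inl i)) fun _ => Sum.inr 0))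

/-- `∀x' ≤ x, θ(x', z̄)`, a formula with free variable `x` (and parameters). -/
noncomputable def allLeX {m : ℕ} (θ : Lor.Formula (Fin m ⊕ Fin 1)) :
    Lor.Formula (Fin m ⊕ Fin 1) :=
  Formula.iAlls (Fin 1)
    (leFml (Term.var (Sum.inr 0)) (Term.var (Sum.inl (Sum.inr 0))) ⟹
      θ.relabel (Sum.elim (fun i => Sum.inl (Sum.inl i)) fun _ => Sum.inr 0))

/-- The conjunction `⋀_{k<j} θ(k, z̄)`. -/
def conjNum {m : ℕ} (θ : Lor.Formula (Fin m ⊕ Fin 1)) : ℕ → Lor.Formula (Fin m)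
  | 0 => ⊤
  | j + 1 => conjNum θ j ⊓ substP θ (numT j)

/-- The conjunction `⋀_{k<j} θ(x+k, z̄)`. -/
def conjShift {m : ℕ} (θ : Lor.Formula (Fin m ⊕ Fin 1)) : ℕ → Lor.Formula (Fin m ⊕ Fin 1)
  | 0 => ⊤
  | j + 1 => conjShift θ j ⊓ substX θ (addT xT (numT j))

/-! ### Induction axioms -/

/-- The induction axiom `I_x θ`:
`∀z̄( θ(0,z̄) ∧ ∀x(θ(x,z̄) → θ(x+1,z̄)) → ∀x θ(x,z̄) )`. -/
noncomputable def indAx {m : ℕ} (θ : Lor.Formula (Fin m ⊕ Fin 1)) : Lor.Sentence :=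
  closeAll ((substP θ zeroT ⊓ allX (θ ⟹ substX θ (addT xT oneT))) ⟹ allX θ)

/-- The `<`-induction axiom `I^<_x θ`:
`∀z̄( ∀y(∀x<y θ(x,z̄) → θ(y,z̄)) → ∀x θ(x,z̄) )`. -/
noncomputable def indLtAx {m : ℕ} (θ : Lor.Formula (Fin m ⊕ Fin 1)) : Lor.Sentence :=
  closeAll (allX (allLtX θ ⟹ θ) ⟹ allX θ)

/-- The `(n+1)`-step induction axiom `I^{(n+1)-step}_x θ`:
`∀z̄( ⋀_{k<n+1} θ(k,z̄) ∧ ∀x(θ(x,z̄) → θ(x+n+1,z̄)) → ∀x θ(x,z̄) )`. -/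
noncomputable def indStepAx {m : ℕ} (n : ℕ) (θ : Lor.Formula (Fin m ⊕ Fin 1)) : Lor.Sentence :=
  closeAll ((conjNum θ (n + 1) ⊓ allX (θ ⟹ substX θ (addT xT (numT (n + 1))))) ⟹ allX θ)

/-- The `(n+1)`-induction axiom `I^{n+1}_x θ`:
`∀z̄( ⋀_{k<n+1} θ(k,z̄) ∧ ∀x(⋀_{k<n+1} θ(x+k,z̄) → θ(x+n+1,z̄)) → ∀x θ(x,z̄) )`. -/
noncomputable def indKAx {m : ℕ} (n : ℕ) (θ : Lor.Formula (Fin m ⊕ Fin 1)) : Lor.Sentence :=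
  closeAll ((conjNum θ (n + 1) ⊓ allX (conjShift θ (n + 1) ⟹ substX θ (addT xT (numT (n + 1))))) ⟹
    allX θ)

/-- The polynomial induction axiom `I^p_x θ`:
`∀z̄( θ(0,z̄) ∧ ∀x(θ(x,z̄) → θ(2x,z̄) ∧ θ(2x+1,z̄)) → ∀x θ(x,z̄) )`, where `2x` is `(1+1)×x`. -/
noncomputable def indPAx {m : ℕ} (θ : Lor.Formula (Fin m ⊕ Fin 1)) : Lor.Sentence :=
  closeAll ((substP θ zeroT ⊓
      allX (θ ⟹ substX θ (mulT twoT xT) ⊓ substX θ (addT (mulT twoT xT) oneT))) ⟹ allX θ)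

/-! ### Theories -/

/-- Peano arithmetic: `PA⁻` plus induction for all `L_OR` formulas. -/
noncomputable def PA : Lor.Theory :=
  PAminus ∪ {σ | ∃ (m : ℕ) (θ : Lor.Formula (Fin m ⊕ Fin 1)), σ = indAx θ}

/-- `IOpen`: `PA⁻` plus induction for all quantifier-free `L_OR` formulas. -/
noncomputable def IOpen : Lor.Theory :=
  PAminus ∪ {σ | ∃ (m : ℕ) (θ : Lor.Formula (Fin m ⊕ Fin 1)), θ.IsQF ∧ σ = indAx θ}

/-! ### Notions of inductiveness

A formula `φ(x)` with exactly one free variable `x` is represented as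
`φ : Lor.Formula (Fin 0 ⊕ Fin 1)` (no parameters). -/

/-- Formulas `φ(x)` with exactly one free variable `x`. -/
abbrev OneVarFormula : Type := Lor.Formula (Fin 0 ⊕ Fin 1)

/-- The sentence `∀x φ(x)`. -/
noncomputable def allS (φ : OneVarFormula) : Lor.Sentence := closeAll (allX φ)

/-- `φ(x)` is inductive: `PA⁻ ⊢ φ(0)` and `PA⁻ ⊢ ∀x(φ(x) → φ(x+1))`. -/
noncomputable def IsInductive (φ : OneVarFormula) : Prop :=
  PAminus ⊨ᵇ closeAll (substP φ zeroT) ∧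
    PAminus ⊨ᵇ closeAll (allX (φ ⟹ substX φ (addT xT oneT)))

/-- `φ(x)` is `<`-inductive: `PA⁻ ⊢ ∀y(∀x<y φ(x) → φ(y))`. -/
noncomputable def IsLtInductive (φ : OneVarFormula) : Prop :=
  PAminus ⊨ᵇ closeAll (allX (allLtX φ ⟹ φ))

/-- `φ(x)` is `(n+1)`-step inductive:
`PA⁻ ⊢ ⋀_{k<n+1} φ(k) ∧ ∀x(φ(x) → φ(x+n+1))`. -/
noncomputable def IsStepInductive (n : ℕ) (φ : OneVarFormula) : Prop :=
  PAminus ⊨ᵇ closeAll (conjNum φ (n + 1) ⊓ allX (φ ⟹ substX φ (addT xT (numT (n + 1)))))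

/-- `φ(x)` is `(n+1)`-inductive:
`PA⁻ ⊢ ⋀_{k<n+1} φ(k) ∧ ∀x(⋀_{k<n+1} φ(x+k) → φ(x+n+1))`. -/
noncomputable def IsKInductive (n : ℕ) (φ : OneVarFormula) : Prop :=
  PAminus ⊨ᵇ
    closeAll (conjNum φ (n + 1) ⊓ allX (conjShift φ (n + 1) ⟹ substX φ (addT xT (numT (n + 1)))))

/-- `φ(x)` is p-inductive (polynomially inductive):
`PA⁻ ⊢ φ(0) ∧ ∀x(φ(x) → φ(2x) ∧ φ(2x+1))`. -/
noncomputable def IsPInductive (φ : OneVarFormula) : Prop :=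
  PAminus ⊨ᵇ closeAll (substP φ zeroT ⊓
    allX (φ ⟹ substX φ (mulT twoT xT) ⊓ substX φ (addT (mulT twoT xT) oneT)))

/-! ### Cuts -/

/-- `φ(x)` is a cut: an inductive formula with `PA⁻ ⊢ ∀x∀y(x<y ∧ φ(y) → φ(x))`. -/
noncomputable def IsCut (φ : OneVarFormula) : Prop :=
  IsInductive φ ∧
    PAminus ⊨ᵇ closeAll
      (ltFml (Term.var (Sum.inr 0) : Lor.Term (Fin 0 ⊕ Fin 2)) (Term.var (Sum.inr 1)) ⊓
          φ.relabel (Sum.elim (fun i => Sum.inl i) fun _ => Sum.inr 1) ⟹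
        φ.relabel (Sum.elim (fun i => Sum.inl i) fun _ => Sum.inr 0))

/-- `φ(x)` is an a-cut: a cut with `PA⁻ ⊢ ∀x(φ(x) → φ(x+x))`. -/
noncomputable def IsACut (φ : OneVarFormula) : Prop :=
  IsCut φ ∧ PAminus ⊨ᵇ closeAll (allX (φ ⟹ substX φ (addT xT xT)))

/-- `φ(x)` is an am-cut: an a-cut with `PA⁻ ⊢ ∀x(φ(x) → φ(x×x))`. -/
noncomputable def IsAMCut (φ : OneVarFormula) : Prop :=
  IsACut φ ∧ PAminus ⊨ᵇ closeAll (allX (φ ⟹ substX φ (mulT xT xT)))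
/-!
Compactness reduces `PA ⊢ σ` to `PA⁻ + I_x θ₁ + ⋯ + I_x θₖ ⊢ σ`. Each `I_x θ` is equivalent to
`∀x φ_θ(x)` for the inductive formula `φ_θ(x) := ∀z̄(θ(0,z̄) ∧ ∀y(θ(y,z̄) → θ(y+1,z̄)) → θ(x,z̄))`,
and inductive formulas are closed under finite conjunctions and under disjunction with a sentence.
Hence `φ := σ ∨ ⋀ᵢ φ_θᵢ` is inductive, and in a model of `PA⁻` where `σ` fails, `∀x φ(x)` would
give all the `I_x θᵢ` and hence `σ`. Conversely, the instance `I_x φ` of induction proves `∀x φ(x)`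
in `PA` for every inductive `φ`.
-/

noncomputable def indHyp {m : ℕ} (θ : Lor.Formula (Fin m ⊕ Fin 1)) : Lor.Formula (Fin m) :=
  substP θ zeroT ⊓ allX (θ ⟹ substX θ (addT xT oneT))

noncomputable def indAxFormula {m : ℕ} (θ : Lor.Formula (Fin m ⊕ Fin 1)) : OneVarFormula :=
  Formula.iAlls (Fin m)
    ((indHyp θ).relabel Sum.inr ⟹
      θ.relabel (Sum.elim Sum.inr fun _ => Sum.inl (Sum.inr 0)))

@[simp]
lemma sumElim_finZero {M : Type*} (zs : Fin 0 → M) (x : M) :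
    (Sum.elim zs fun _ : Fin 1 => x) = fun _ => x :=
  funext fun a => a.casesOn (fun i => i.elim0) fun _ => rfl

section Semantics

variable {M : Type*} [Lor.Structure M]

def zeroM : M := constantMap (L := Lor) LorFunc.zero

def succM (x : M) : M :=
  Structure.funMap (L := Lor) LorFunc.add ![x, constantMap (L := Lor) LorFunc.one]

@[simp]
lemma realize_zeroT {α : Type} (v : α → M) : (zeroT : Lor.Term α).realize v = zeroM :=
  Term.realize_constants

@[simp]
lemma realize_addT_oneT {α : Type} (v : α → M) (t : Lor.Term α) :
    (addT t oneT).realize v = succM (t.realize v) := by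
  -- `erw`: the symbols have type `LorFunc n`, which matches `Lor.Functions n` only after unfolding
  erw [addT, Term.realize_functions_apply₂, oneT, Term.realize_constants]
  rfl

@[simp]
lemma realize_xT {m : ℕ} (v : Fin m ⊕ Fin 1 → M) :
    (xT : Lor.Term (Fin m ⊕ Fin 1)).realize v = v (Sum.inr 0) :=
  rfl

@[simp]
lemma realize_relabel_sentence {α : Type} (σ : Lor.Sentence) (v : α → M) :
    (σ.relabel (fun e : Empty => e.elim)).Realize v ↔ M ⊨ σ := by
  rw [Formula.realize_relabel, Sentence.Realize, Unique.eq_default (v ∘ _)]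

lemma realize_closeAll {α : Type} [Finite α] {φ : Lor.Formula α} :
    M ⊨ closeAll φ ↔ ∀ v : α → M, φ.Realize v := by
  simp [closeAll, Sentence.Realize, Function.comp_def]

@[simp]
lemma realize_allX {m : ℕ} {θ : Lor.Formula (Fin m ⊕ Fin 1)} {zs : Fin m → M} :
    (allX θ).Realize zs ↔ ∀ x : M, θ.Realize (Sum.elim zs fun _ => x) := by
  rw [allX, Formula.realize_iAlls]
  exact (Equiv.funUnique (Fin 1) M).forall_congr_left

@[simp]
lemma realize_substP {m : ℕ} {θ : Lor.Formula (Fin m ⊕ Fin 1)} {t : Lor.Term (Fin m)}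
    {zs : Fin m → M} :
    (substP θ t).Realize zs ↔ θ.Realize (Sum.elim zs fun _ => t.realize zs) := by
  rw [substP, Formula.Realize, BoundedFormula.realize_subst]
  refine iff_of_eq (congrArg (BoundedFormula.Realize θ · default) (funext fun a => ?_))
  cases a <;> rfl

@[simp]
lemma realize_substX {m : ℕ} {θ : Lor.Formula (Fin m ⊕ Fin 1)} {t : Lor.Term (Fin m ⊕ Fin 1)}
    {v : Fin m ⊕ Fin 1 → M} :
    (substX θ t).Realize v ↔ θ.Realize (Sum.elim (v ∘ Sum.inl) fun _ => t.realize v) := by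
  rw [substX, Formula.Realize, BoundedFormula.realize_subst]
  refine iff_of_eq (congrArg (BoundedFormula.Realize θ · default) (funext fun a => ?_))
  cases a <;> rfl

lemma realize_allS {φ : OneVarFormula} : M ⊨ allS φ ↔ ∀ x : M, φ.Realize fun _ => x := by
  simp [allS, realize_closeAll]

lemma realize_indHyp {m : ℕ} {θ : Lor.Formula (Fin m ⊕ Fin 1)} {zs : Fin m → M} :
    (indHyp θ).Realize zs ↔ θ.Realize (Sum.elim zs fun _ => zeroM) ∧
      ∀ x, θ.Realize (Sum.elim zs fun _ => x) → θ.Realize (Sum.elim zs fun _ => succM x) := by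
  simp [indHyp]

lemma realize_indAx {m : ℕ} {θ : Lor.Formula (Fin m ⊕ Fin 1)} :
    M ⊨ indAx θ ↔
      ∀ zs : Fin m → M, (indHyp θ).Realize zs → ∀ x, θ.Realize (Sum.elim zs fun _ => x) := by
  change M ⊨ closeAll (indHyp θ ⟹ allX θ) ↔ _
  simp only [realize_closeAll, Formula.realize_imp, realize_allX]

lemma realize_indAxFormula {m : ℕ} {θ : Lor.Formula (Fin m ⊕ Fin 1)} {x : M} :
    (indAxFormula θ).Realize (fun _ => x) ↔
      ∀ zs : Fin m → M, (indHyp θ).Realize zs → θ.Realize (Sum.elim zs fun _ => x) := by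
  rw [indAxFormula, Formula.realize_iAlls]
  refine forall_congr' fun zs => ?_
  rw [Formula.realize_imp, Formula.realize_relabel, Formula.realize_relabel]
  refine imp_congr Iff.rfl (iff_of_eq (congrArg _ (funext fun a => ?_)))
  cases a <;> rfl

lemma realize_allS_indAxFormula {m : ℕ} {θ : Lor.Formula (Fin m ⊕ Fin 1)} :
    M ⊨ allS (indAxFormula θ) ↔ M ⊨ indAx θ := by
  simp only [realize_allS, realize_indAx, realize_indAxFormula]
  exact forall_comm.trans (forall_congr' fun _ => forall_comm)

end Semantics

lemma isInductive_iff {φ : OneVarFormula} :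
    IsInductive φ ↔ ∀ M : Theory.ModelType.{0, 0, 0} PAminus, φ.Realize (fun _ => (zeroM : M)) ∧
      ∀ x : M, φ.Realize (fun _ => x) → φ.Realize (fun _ => succM x) := by
  simp [IsInductive, Theory.models_sentence_iff, realize_closeAll, forall_and]

lemma isInductive_top : IsInductive ⊤ :=
  isInductive_iff.2 fun _ => by simp

lemma isInductive_indAxFormula {m : ℕ} (θ : Lor.Formula (Fin m ⊕ Fin 1)) :
    IsInductive (indAxFormula θ) := by
  simp only [isInductive_iff, realize_indAxFormula, realize_indHyp]
  exact fun M => ⟨fun zs h => h.1, fun x hx zs h => h.2 x (hx zs h)⟩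

lemma IsInductive.iInf {ι : Type} [Finite ι] {φ : ι → OneVarFormula}
    (h : ∀ i, IsInductive (φ i)) : IsInductive (Formula.iInf φ) := by
  simp only [isInductive_iff, Formula.realize_iInf] at h ⊢
  exact fun M => ⟨fun i => (h i M).1, fun x hx i => (h i M).2 x (hx i)⟩

lemma IsInductive.sentence_sup {φ : OneVarFormula} (h : IsInductive φ) (σ : Lor.Sentence) :
    IsInductive (σ.relabel (fun e : Empty => e.elim) ⊔ φ) := by
  simp only [isInductive_iff, Formula.realize_sup, realize_relabel_sentence] at h ⊢
  exact fun M => ⟨Or.inr (h M).1, fun x => Or.imp_right ((h M).2 x)⟩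

lemma IsInductive.pa_models_allS {φ : OneVarFormula} (h : IsInductive φ) : PA ⊨ᵇ allS φ := by
  refine Theory.models_sentence_iff.2 fun M => ?_
  have hInd : M ⊨ indAx φ := Theory.realize_sentence_of_mem PA (Or.inr ⟨0, φ, rfl⟩)
  have : M ⊨ PAminus := M.is_model.mono Set.subset_union_left
  obtain ⟨h0, hsucc⟩ := isInductive_iff.1 h ⟨M⟩
  have hall := realize_indAx.1 hInd Fin.elim0 (realize_indHyp.2 (by simpa using ⟨h0, hsucc⟩))
  simpa [realize_allS] using hall

lemma exists_isInductive_allS_iff_of_mem_PA {τ : Lor.Sentence} (hτ : τ ∈ PA) :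
    ∃ ψ : OneVarFormula, IsInductive ψ ∧
      ∀ M : Theory.ModelType.{0, 0, 0} PAminus, M ⊨ allS ψ ↔ M ⊨ τ := by
  rcases hτ with hτ | ⟨m, θ, rfl⟩
  · exact ⟨⊤, isInductive_top, fun M => by simp [realize_allS, M.is_model.realize_of_mem τ hτ]⟩
  · exact ⟨indAxFormula θ, isInductive_indAxFormula θ, fun M => realize_allS_indAxFormula⟩

/-- `PA ⊢ σ` if and only if there is an inductive formula `φ(x)` such that
`PA⁻ ⊢ ∀x φ(x) ↔ σ`. -/
theorem stmt3 (σ : Lor.Sentence) :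
    PA ⊨ᵇ σ ↔ ∃ φ : OneVarFormula, IsInductive φ ∧ PAminus ⊨ᵇ (allS φ ⇔ σ) := by
  constructor
  · intro hσ
    obtain ⟨T0, hT0, hT0σ⟩ := Theory.models_iff_finset_models.1 hσ
    choose ψ hψ hψτ using fun τ : T0 => exists_isInductive_allS_iff_of_mem_PA (hT0 τ.2)
    refine ⟨σ.relabel (fun e : Empty => e.elim) ⊔ Formula.iInf ψ,
      (IsInductive.iInf hψ).sentence_sup σ, Theory.models_sentence_iff.2 fun M => ?_⟩
    simp only [Sentence.realize_iff, realize_allS, Formula.realize_sup, realize_relabel_sentence,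
      Formula.realize_iInf]
    refine ⟨fun h => ?_, fun h _ => Or.inl h⟩
    by_contra hMσ
    have : M ⊨ (T0 : Lor.Theory) := (Theory.model_iff _).2 fun τ hτ =>
      (hψτ ⟨τ, hτ⟩ M).1 (realize_allS.2 fun x => (h x).resolve_left hMσ ⟨τ, hτ⟩)
    exact hMσ (hT0σ.realize_sentence M)
  · rintro ⟨φ, hφ, hφσ⟩
    refine Theory.models_sentence_iff.2 fun M => ?_
    have : M ⊨ PAminus := M.is_model.mono Set.subset_union_left
    exact ((Sentence.realize_iff M).1 (hφσ.realize_sentence M)).1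
      (hφ.pa_models_allS.realize_sentence M)
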